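/- arXiv:1307.2834 — 2 statements merged into one kernel-verified Lean document; each statement's English description precedes it below -/
import Mathlib

section
/- Let s < 0 be a real number and let N > 2 be an integer. Then v_s(N-1) - 2·v_s(N) + v_s(N+1) ≤ -(2/((N+1)N))·(v_s(N-1) + 1/s). -/
open scoped BigOperators

/-- The standardized Riesz pair-energy `V_s(r) = (r^{-s} - 1)/s` for `s ≠ 0`,
and `V_0(r) = -log r`. -/
noncomputable def Vpair (s r : ℝ) : ℝ := if s = 0 then -Real.log r else (r ^ (-s) - 1) / s

/-- The average standardized Riesz pair-energy of an `N`-point configuration on the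
unit sphere `S² ⊂ ℝ³`. -/
noncomputable def avgE (s : ℝ) (N : ℕ) (q : Fin N → EuclideanSpace ℝ (Fin 3)) : ℝ :=
  2 / ((N : ℝ) * ((N : ℝ) - 1)) *
    ∑ i : Fin N, ∑ j : Fin N, if i < j then Vpair s ‖q i - q j‖ else 0

/-- The minimal average standardized Riesz pair-energy `v_s(N)`: the infimum of the
average pair-energy over all configurations of `N` pairwise distinct points on `S²`. -/
noncomputable def vmin (s : ℝ) (N : ℕ) : ℝ :=
  sInf { E : ℝ | ∃ q : Fin N → EuclideanSpace ℝ (Fin 3),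
    (∀ i, ‖q i‖ = 1) ∧ Function.Injective q ∧ E = avgE s N q }

/-!
For every configuration `q` of `N` distinct points on `S²` with mean pair energy `A`, the
point potentials `∑_{j ≠ k} V_s(|q_k - q_j|)` average to `(N - 1) A`. Deleting a point of at
least average potential gives `v_s(N - 1) ≤ A`. Adding a new point close to a point of at most
average potential costs at most `(N - 1) A + V_s(0) + ε`, because for `s < 0` the pair energy
is continuous at `0` with `V_s(0) = -1/s`; hence `N (N + 1) v_s(N + 1) ≤ (N - 1) (N + 2) A - 2/s`.
Taking the infimum over `q`, the claim is a nonnegative combination of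
`v_s(N - 1) ≤ v_s(N)` and `N (N + 1) v_s(N + 1) ≤ (N - 1) (N + 2) v_s(N) - 2/s`.
-/

open Finset Filter Topology

theorem two_mul_sum_sum_ite_lt {ι R : Type*} [Fintype ι] [LinearOrder ι] [CommRing R]
    (f : ι → ι → R) (hf : ∀ i j, f i j = f j i) :
    2 * ∑ i, ∑ j, (if i < j then f i j else 0) = ∑ i, ∑ j, f i j - ∑ i, f i i := by
  have split : ∑ i, ∑ j, f i j = ∑ i, ∑ j, ((if i < j then f i j else 0)
      + (if j < i then f j i else 0) + (if i = j then f i j else 0)) := by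
    refine sum_congr rfl fun i _ => sum_congr rfl fun j _ => ?_
    rcases lt_trichotomy i j with h | rfl | h
    · simp [h, h.not_gt, h.ne]
    · simp
    · simp [h, h.not_gt, h.ne', hf i j]
  rw [split]
  simp only [sum_add_distrib, sum_ite_eq, mem_univ, if_true]
  rw [sum_comm (f := fun i j => if j < i then f j i else 0)]
  ring

section Vpair

variable {s r : ℝ}

theorem Vpair_of_ne_zero (hs : s ≠ 0) (r : ℝ) : Vpair s r = (r ^ (-s) - 1) / s := if_neg hs

theorem Vpair_zero (hs : s ≠ 0) : Vpair s 0 = -(1 / s) := by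
  rw [Vpair_of_ne_zero hs, Real.zero_rpow (neg_ne_zero.mpr hs)]
  ring

theorem Vpair_two_le (hr : 0 < r) (hr2 : r ≤ 2) : Vpair s 2 ≤ Vpair s r := by
  rcases lt_trichotomy s 0 with hs | rfl | hs
  · rw [Vpair_of_ne_zero hs.ne, Vpair_of_ne_zero hs.ne, div_le_div_right_of_neg hs]
    gcongr
    linarith
  · simpa [Vpair] using Real.log_le_log hr hr2
  · rw [Vpair_of_ne_zero hs.ne', Vpair_of_ne_zero hs.ne']
    refine div_le_div_of_nonneg_right ?_ hs.le
    linarith [Real.rpow_le_rpow_of_nonpos hr hr2 (by linarith : -s ≤ 0)]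

theorem continuous_Vpair (hs : s < 0) : Continuous (Vpair s) := by
  rw [show Vpair s = fun r => (r ^ (-s) - 1) / s from funext (Vpair_of_ne_zero hs.ne)]
  exact ((Real.continuous_rpow_const (by linarith)).sub continuous_const).div_const s

end Vpair

section Energy

variable {E : Type*} [SeminormedAddCommGroup E] (s : ℝ) {n : ℕ}

noncomputable def rieszPotential (q : Fin n → E) (x : E) : ℝ := ∑ i, Vpair s ‖q i - x‖

/-- Sum of `V_s` over all ordered pairs, the diagonal (each term `V_s 0`) included: this makes
deleting or appending a point an exact identity. -/
noncomputable def rieszEnergy (q : Fin n → E) : ℝ := ∑ j, rieszPotential s q (q j)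

theorem continuous_rieszPotential {s : ℝ} (hs : s < 0) (q : Fin n → E) :
    Continuous (rieszPotential s q) :=
  continuous_finsetSum _ fun _ _ =>
    (continuous_Vpair hs).comp (continuous_const.sub continuous_id).norm

theorem rieszPotential_succAbove (q : Fin (n + 1) → E) (k : Fin (n + 1)) (x : E) :
    rieszPotential s q x = Vpair s ‖q k - x‖ + rieszPotential s (q ∘ k.succAbove) x :=
  Fin.sum_univ_succAbove _ k

theorem rieszPotential_snoc (q : Fin n → E) (y x : E) :
    rieszPotential s (Fin.snoc q y : Fin (n + 1) → E) x
      = rieszPotential s q x + Vpair s ‖y - x‖ := by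
  simp only [rieszPotential, Fin.sum_univ_castSucc, Fin.snoc_castSucc, Fin.snoc_last]

theorem rieszPotential_comm (q : Fin n → E) (x : E) :
    ∑ j, Vpair s ‖x - q j‖ = rieszPotential s q x := by
  simp only [rieszPotential, norm_sub_rev]

theorem rieszEnergy_comp_succAbove (q : Fin (n + 1) → E) (k : Fin (n + 1)) :
    rieszEnergy s (q ∘ k.succAbove)
      = rieszEnergy s q - 2 * rieszPotential s q (q k) + Vpair s 0 := by
  rw [rieszEnergy, rieszEnergy, Fin.sum_univ_succAbove _ k]
  simp only [rieszPotential_succAbove s q k, sum_add_distrib, sub_self, norm_zero]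
  have hrow := rieszPotential_comm s (q ∘ k.succAbove) (q k)
  simp only [Function.comp_apply] at hrow ⊢
  rw [hrow]
  ring

theorem rieszEnergy_snoc (q : Fin n → E) (x : E) :
    rieszEnergy s (Fin.snoc q x : Fin (n + 1) → E)
      = rieszEnergy s q + 2 * rieszPotential s q x + Vpair s 0 := by
  simp only [rieszEnergy, Fin.sum_univ_castSucc, Fin.snoc_castSucc, Fin.snoc_last,
    rieszPotential_snoc, sum_add_distrib, rieszPotential_comm, sub_self, norm_zero]
  ring

theorem exists_rieszEnergy_le_mul_rieszPotential (q : Fin n → E) [NeZero n] :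
    ∃ k, rieszEnergy s q ≤ n * rieszPotential s q (q k) := by
  obtain ⟨k, -, hk⟩ := exists_le_of_sum_le (f := fun _ => rieszEnergy s q)
    (g := fun k => n * rieszPotential s q (q k)) univ_nonempty
    (by simp [rieszEnergy, ← mul_sum])
  exact ⟨k, hk⟩

theorem exists_mul_rieszPotential_le_rieszEnergy (q : Fin n → E) [NeZero n] :
    ∃ k, n * rieszPotential s q (q k) ≤ rieszEnergy s q := by
  obtain ⟨k, -, hk⟩ := exists_le_of_sum_le (f := fun k => n * rieszPotential s q (q k))
    (g := fun _ => rieszEnergy s q) univ_nonempty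
    (by simp [rieszEnergy, ← mul_sum])
  exact ⟨k, hk⟩

end Energy

theorem Preperfect.exists_mem_notMem_lt_add {X : Type*} [TopologicalSpace X] [T1Space X]
    {C F : Set X} (hC : Preperfect C) {x : X} (hx : x ∈ C) (hF : F.Finite) {f : X → ℝ}
    (hf : ContinuousAt f x) {ε : ℝ} (hε : 0 < ε) :
    ∃ y ∈ C, y ∉ F ∧ f y < f x + ε := by
  have hC : ∃ᶠ y in 𝓝[≠] x, y ∈ C := accPt_iff_frequently_nhdsNE.mp (hC x hx)
  have hF : ∀ᶠ y in 𝓝[≠] x, y ∉ F := by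
    filter_upwards [nhdsNE_of_nhdsNE_sdiff_finite univ_mem hF] with y hy using hy.2
  have hf : ∀ᶠ y in 𝓝[≠] x, f y < f x + ε :=
    (hf.mono_left nhdsWithin_le_nhds).eventually_lt_const (by linarith)
  obtain ⟨y, hyC, hyF, hyf⟩ := (hC.and_eventually (hF.and hf)).exists
  exact ⟨y, hyC, hyF, hyf⟩

section Sphere

variable {E : Type*} [NormedAddCommGroup E] [NormedSpace ℝ E]

theorem nontrivial_sphere_zero_one [Nontrivial E] : (Metric.sphere (0 : E) 1).Nontrivial := by
  obtain ⟨p, hp⟩ := NormedSpace.sphere_nonempty_rclike (𝕜 := ℝ) (E := E) zero_le_one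
  refine ⟨p, hp, -p, by simpa using hp, fun h => ?_⟩
  have h2 : ‖p + p‖ = 2 := by
    rw [← two_smul ℝ, norm_smul, mem_sphere_zero_iff_norm.mp hp]
    norm_num
  nth_rewrite 2 [h] at h2
  simp at h2

theorem preperfect_sphere_zero_one (h : 1 < Module.rank ℝ E) :
    Preperfect (Metric.sphere (0 : E) 1) :=
  have : Nontrivial E := rank_pos_iff_nontrivial.mp (zero_lt_one.trans h)
  (isPreconnected_sphere h 0 1).preperfect_of_nontrivial nontrivial_sphere_zero_one

theorem infinite_sphere_zero_one (h : 1 < Module.rank ℝ E) :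
    (Metric.sphere (0 : E) 1).Infinite :=
  have : Nontrivial E := rank_pos_iff_nontrivial.mp (zero_lt_one.trans h)
  (isPreconnected_sphere h 0 1).infinite_of_nontrivial nontrivial_sphere_zero_one

end Sphere

section Configurations

local notation "ℝ³" => EuclideanSpace ℝ (Fin 3)

theorem one_lt_rank_euclideanSpace_fin_three : 1 < Module.rank ℝ ℝ³ := by
  rw [← Module.finrank_eq_rank, finrank_euclideanSpace_fin]
  norm_num

theorem exists_unit_injective (n : ℕ) :
    ∃ q : Fin n → ℝ³, (∀ i, ‖q i‖ = 1) ∧ Function.Injective q := by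
  let e := (infinite_sphere_zero_one one_lt_rank_euclideanSpace_fin_three).natEmbedding
  refine ⟨fun i => e i, fun i => mem_sphere_zero_iff_norm.mp (e i).2, ?_⟩
  exact Subtype.val_injective.comp (e.injective.comp Fin.val_injective)

variable {s : ℝ} {n : ℕ}

theorem rieszEnergy_eq_avgE (s : ℝ) (hn : 2 ≤ n) (q : Fin n → ℝ³) :
    rieszEnergy s q = avgE s n q * (n * (n - 1)) + n * Vpair s 0 := by
  have h := two_mul_sum_sum_ite_lt (fun i j => Vpair s ‖q i - q j‖) fun i j => by
    rw [norm_sub_rev]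
  simp only [sub_self, norm_zero, sum_const, card_univ, Fintype.card_fin, nsmul_eq_mul] at h
  have hE : rieszEnergy s q = ∑ i, ∑ j, Vpair s ‖q i - q j‖ := sum_comm
  have hn' : (2 : ℝ) ≤ n := by exact_mod_cast hn
  have hn0 : (n : ℝ) * (n - 1) ≠ 0 := by nlinarith
  rw [avgE, hE, div_mul_eq_mul_div, div_mul_cancel₀ _ hn0, h]
  ring

theorem Vpair_two_le_avgE (hn : 2 ≤ n) {q : Fin n → ℝ³} (hq1 : ∀ i, ‖q i‖ = 1)
    (hq : Function.Injective q) : Vpair s 2 ≤ avgE s n q := by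
  have hn' : (2 : ℝ) ≤ n := by exact_mod_cast hn
  have hn1 : (n : ℝ) - 1 ≠ 0 := by linarith
  have hcount := two_mul_sum_sum_ite_lt (fun (_ _ : Fin n) => Vpair s 2) fun _ _ => rfl
  simp only [sum_const, card_univ, Fintype.card_fin, nsmul_eq_mul] at hcount
  calc Vpair s 2
        = 2 / (n * (n - 1)) * ∑ i : Fin n, ∑ j : Fin n, if i < j then Vpair s 2 else 0 := by
        rw [div_mul_eq_mul_div, hcount]
        field_simp
    _ ≤ avgE s n q := by
        refine mul_le_mul_of_nonneg_left (sum_le_sum fun i _ => sum_le_sum fun j _ => ?_)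
          (div_nonneg zero_le_two (mul_nonneg (by linarith) (by linarith)))
        split_ifs with hij
        · refine Vpair_two_le (norm_pos_iff.mpr (sub_ne_zero.mpr (hq.ne hij.ne))) ?_
          calc ‖q i - q j‖ ≤ ‖q i‖ + ‖q j‖ := norm_sub_le _ _
            _ = 2 := by rw [hq1, hq1]; norm_num
        · rfl

theorem vmin_le_avgE (hn : 2 ≤ n) {q : Fin n → ℝ³} (hq1 : ∀ i, ‖q i‖ = 1)
    (hq : Function.Injective q) : vmin s n ≤ avgE s n q := by
  refine csInf_le ⟨Vpair s 2, ?_⟩ ⟨q, hq1, hq, rfl⟩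
  rintro _ ⟨q', hq1', hq', rfl⟩
  exact Vpair_two_le_avgE hn hq1' hq'

theorem le_vmin {a : ℝ}
    (h : ∀ q : Fin n → ℝ³, (∀ i, ‖q i‖ = 1) → Function.Injective q →
      a ≤ avgE s n q) :
    a ≤ vmin s n := by
  obtain ⟨q, hq1, hq⟩ := exists_unit_injective n
  refine le_csInf ⟨_, q, hq1, hq, rfl⟩ ?_
  rintro _ ⟨q', hq1', hq', rfl⟩
  exact h q' hq1' hq'

theorem vmin_le_avgE_succ (hn : 2 ≤ n) {q : Fin (n + 1) → ℝ³} (hq1 : ∀ i, ‖q i‖ = 1)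
    (hq : Function.Injective q) : vmin s n ≤ avgE s (n + 1) q := by
  have hn' : (2 : ℝ) ≤ n := by exact_mod_cast hn
  obtain ⟨k, hk⟩ := exists_rieszEnergy_le_mul_rieszPotential s q
  have hq' : Function.Injective (q ∘ k.succAbove) := hq.comp Fin.succAbove_right_injective
  have hdel := vmin_le_avgE (s := s) (q := q ∘ k.succAbove) hn (fun i => hq1 _) hq'
  have hE := rieszEnergy_eq_avgE s (by omega) q
  have hE' := rieszEnergy_eq_avgE s hn (q ∘ k.succAbove)
  rw [rieszEnergy_comp_succAbove] at hE'
  push_cast at hk hE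
  have hpos : (0 : ℝ) < (n + 1) * n * (n - 1) := by
    have : (0 : ℝ) < (n + 1) * n := by positivity
    nlinarith
  refine hdel.trans (le_of_mul_le_mul_left ?_ hpos)
  linear_combination (n - 1) * hE - (n + 1) * hE' + 2 * hk

theorem vmin_le_vmin_succ (hn : 2 ≤ n) : vmin s n ≤ vmin s (n + 1) :=
  le_vmin fun _ hq1 hq => vmin_le_avgE_succ hn hq1 hq

theorem exists_unit_notMem_rieszPotential_lt (hs : s < 0) {q : Fin n → ℝ³}
    (hq1 : ∀ i, ‖q i‖ = 1) (k : Fin n) {ε : ℝ} (hε : 0 < ε) :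
    ∃ x : ℝ³, ‖x‖ = 1 ∧ x ∉ Set.range q ∧
      rieszPotential s q x < rieszPotential s q (q k) + ε := by
  obtain ⟨x, hx1, hxq, hx⟩ :=
    (preperfect_sphere_zero_one one_lt_rank_euclideanSpace_fin_three).exists_mem_notMem_lt_add
    (mem_sphere_zero_iff_norm.mpr (hq1 k)) (Set.finite_range q)
    (continuous_rieszPotential hs q).continuousAt hε
  exact ⟨x, mem_sphere_zero_iff_norm.mp hx1, hxq, hx⟩

theorem vmin_succ_mul_le_avgE (hs : s < 0) (hn : 2 ≤ n) {q : Fin n → ℝ³}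
    (hq1 : ∀ i, ‖q i‖ = 1) (hq : Function.Injective q) :
    vmin s (n + 1) * ((n + 1) * n) ≤ avgE s n q * ((n - 1) * (n + 2)) + 2 * Vpair s 0 := by
  have : NeZero n := ⟨by omega⟩
  obtain ⟨k, hk⟩ := exists_mul_rieszPotential_le_rieszEnergy s q
  refine le_of_forall_pos_lt_add fun ε hε => ?_
  obtain ⟨x, hx1, hxq, hx⟩ := exists_unit_notMem_rieszPotential_lt hs hq1 k (half_pos hε)
  have hq' : Function.Injective (Fin.snoc q x : Fin (n + 1) → ℝ³) :=
    Fin.snoc_injective_of_injective hq hxq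
  have hadd := vmin_le_avgE (s := s) (n := n + 1) (by omega)
    (Fin.lastCases (by simpa using hx1) (by simpa using hq1)) hq'
  have hE := rieszEnergy_eq_avgE s hn q
  have hE' := rieszEnergy_eq_avgE s (by omega) (Fin.snoc q x)
  rw [rieszEnergy_snoc] at hE'
  push_cast at hE'
  have hpos : (0 : ℝ) < (n + 1) * n := by positivity
  refine (mul_le_mul_of_nonneg_right hadd hpos.le).trans_lt
    (lt_of_mul_lt_mul_left ?_ (Nat.cast_nonneg n))
  linear_combination (n + 2) * hE - n * hE' + 2 * hk + 2 * n * hx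

theorem vmin_succ_mul_le (hs : s < 0) (hn : 2 ≤ n) :
    vmin s (n + 1) * ((n + 1) * n) ≤ vmin s n * ((n - 1) * (n + 2)) + 2 * Vpair s 0 := by
  have hpos : (0 : ℝ) < (n - 1) * (n + 2) := by
    have : (2 : ℝ) ≤ n := by exact_mod_cast hn
    nlinarith
  have h := le_vmin (s := s) (n := n)
    (a := (vmin s (n + 1) * ((n + 1) * n) - 2 * Vpair s 0) / ((n - 1) * (n + 2)))
    fun q hq1 hq => by
      rw [div_le_iff₀ hpos]
      linarith [vmin_succ_mul_le_avgE hs hn hq1 hq]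
  rw [div_le_iff₀ hpos] at h
  linarith

end Configurations

theorem stmt1 (s : ℝ) (hs : s < 0) (N : ℕ) (hN : 2 < N) :
    vmin s (N - 1) - 2 * vmin s N + vmin s (N + 1)
      ≤ -(2 / (((N : ℝ) + 1) * (N : ℝ))) * (vmin s (N - 1) + 1 / s) := by
  obtain ⟨m, rfl⟩ : ∃ m, N = m + 1 := ⟨N - 1, by omega⟩
  rw [Nat.add_sub_cancel]
  have hmono := vmin_le_vmin_succ (s := s) (n := m) (by omega)
  have hadd := vmin_succ_mul_le hs (n := m + 1) (by omega)
  rw [Vpair_zero hs.ne] at hadd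
  push_cast at hadd ⊢
  have hD : (0 : ℝ) < (m + 1 + 1) * (m + 1) := by positivity
  rw [show ∀ x : ℝ, -(2 / ((m + 1 + 1) * (m + 1))) * x = -(2 * x) / ((m + 1 + 1) * (m + 1)) from
    fun x => by ring, le_div_iff₀ hD]
  linear_combination hadd + ((m + 1 + 1) * (m + 1) + 2) * hmono
end

section
/- Let s < -2 be a real number. Then the map n ↦ v_s(2n) restricted to even integers is locally strictly concave: for every integer n ≥ 2, v_s(2(n-1)) - 2·v_s(2n) + v_s(2(n+1)) < 0. -/
open scoped BigOperators

/-!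
For unit vectors and `t ≥ 2` one has `‖p - q‖ ^ t ≤ 2 ^ (t - 2) * ‖p - q‖ ^ 2`, and
`∑_{i<j} ‖q i - q j‖ ^ 2 = N ^ 2 - ‖∑ i, q i‖ ^ 2 ≤ N ^ 2`. This bounds the average energy from
below by `antipodalEnergy s N`, with equality when all distances lie in `{0, 2}` and the points
sum to `0`, as for `N / 2` points at each of two antipodes. That configuration is not injective,
but it is a limit of injective ones (two small antipodal arcs), so by continuity of the energy
`v_s(2m) = antipodalEnergy s (2m)`. Finally, with `c = 2 ^ (-s - 1)`,
`antipodalEnergy s N = (c - 1) / s + (c / s) / (N - 1)` and `c / s < 0`, so it is strictly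
concave in `N`.
-/

open Real Filter Topology

section PairSum

variable {ι : Type*} [Fintype ι] [LinearOrder ι]

noncomputable def pairSum (f : ι → ι → ℝ) : ℝ := ∑ i, ∑ j, if i < j then f i j else 0

lemma sum_sum_eq_sum_diag_add_two_mul_pairSum (f : ι → ι → ℝ) (hf : ∀ i j, f i j = f j i) :
    ∑ i, ∑ j, f i j = ∑ i, f i i + 2 * pairSum f := by
  have hsplit : ∀ i j, f i j = (if i < j then f i j else 0) + (if j < i then f j i else 0)
      + (if i = j then f i j else 0) := by
    intro i j
    rcases lt_trichotomy i j with h | rfl | h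
    · simp [h, h.ne, h.not_gt]
    · simp
    · simp [h, h.ne', h.not_gt, hf i j]
  have hswap : ∑ i, ∑ j, (if j < i then f j i else 0) = pairSum f := Finset.sum_comm
  rw [Finset.sum_congr rfl fun i _ ↦ Finset.sum_congr rfl fun j _ ↦ hsplit i j]
  simp only [Finset.sum_add_distrib, hswap, Finset.sum_ite_eq, Finset.mem_univ, if_true]
  rw [← pairSum]
  ring

lemma pairSum_one :
    pairSum (fun _ _ : ι ↦ (1 : ℝ)) = Fintype.card ι * (Fintype.card ι - 1) / 2 := by
  have := sum_sum_eq_sum_diag_add_two_mul_pairSum (fun _ _ : ι ↦ (1 : ℝ)) (fun _ _ ↦ rfl)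
  simp only [Finset.sum_const, Finset.card_univ, nsmul_eq_mul, mul_one] at this
  linarith

lemma pairSum_mono {f g : ι → ι → ℝ} (h : ∀ i j, f i j ≤ g i j) : pairSum f ≤ pairSum g :=
  Finset.sum_le_sum fun i _ ↦ Finset.sum_le_sum fun j _ ↦ by split_ifs <;> simp [h]

lemma pairSum_congr {f g : ι → ι → ℝ} (h : ∀ i j, f i j = g i j) : pairSum f = pairSum g := by
  simp only [pairSum, h]

lemma pairSum_sub (f g : ι → ι → ℝ) :
    pairSum (fun i j ↦ f i j - g i j) = pairSum f - pairSum g := by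
  simp only [pairSum, ← Finset.sum_sub_distrib]
  exact Finset.sum_congr rfl fun i _ ↦ Finset.sum_congr rfl fun j _ ↦ by split_ifs <;> simp

lemma pairSum_div (f : ι → ι → ℝ) (c : ℝ) :
    pairSum (fun i j ↦ f i j / c) = pairSum f / c := by
  simp only [pairSum, Finset.sum_div]
  exact Finset.sum_congr rfl fun i _ ↦ Finset.sum_congr rfl fun j _ ↦ by split_ifs <;> simp

lemma pairSum_const_mul (c : ℝ) (f : ι → ι → ℝ) :
    pairSum (fun i j ↦ c * f i j) = c * pairSum f := by
  simp only [pairSum, Finset.mul_sum]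
  exact Finset.sum_congr rfl fun i _ ↦ Finset.sum_congr rfl fun j _ ↦ by split_ifs <;> simp

end PairSum

lemma rpow_le_two_rpow_mul_sq {r t : ℝ} (hr : 0 ≤ r) (hr2 : r ≤ 2) (ht : 2 ≤ t) :
    r ^ t ≤ 2 ^ (t - 2) * r ^ 2 := by
  calc r ^ t = r ^ (t - 2) * r ^ (2 : ℝ) := by
        rw [← Real.rpow_add' hr (by linarith), sub_add_cancel]
    _ ≤ 2 ^ (t - 2) * r ^ 2 := by
        rw [Real.rpow_two]
        gcongr

section UnitVectors

variable {ι E : Type*} [Fintype ι] [LinearOrder ι] [NormedAddCommGroup E] [InnerProductSpace ℝ E]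

lemma pairSum_norm_sub_sq {q : ι → E} (hq : ∀ i, ‖q i‖ = 1) :
    pairSum (fun i j ↦ ‖q i - q j‖ ^ 2) = (Fintype.card ι : ℝ) ^ 2 - ‖∑ i, q i‖ ^ 2 := by
  have hsum := sum_sum_eq_sum_diag_add_two_mul_pairSum (fun i j ↦ ‖q i - q j‖ ^ 2)
    fun i j ↦ by rw [norm_sub_rev]
  have hexpand : ∑ i, ∑ j, ‖q i - q j‖ ^ 2
      = 2 * (Fintype.card ι : ℝ) ^ 2 - 2 * ∑ i, ∑ j, inner ℝ (q i) (q j) := by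
    simp only [norm_sub_sq_real, hq, Finset.sum_sub_distrib, Finset.sum_add_distrib,
      ← Finset.mul_sum, Finset.sum_const, Finset.card_univ, nsmul_eq_mul]
    ring
  have hsq : ‖∑ i, q i‖ ^ 2 = ∑ i, ∑ j, inner ℝ (q i) (q j) := by
    rw [← real_inner_self_eq_norm_sq, sum_inner]
    simp only [inner_sum]
  simp only [sub_self, norm_zero, zero_pow two_ne_zero, Finset.sum_const_zero, zero_add]
    at hsum
  linarith

lemma pairSum_rpow_le {q : ι → E} (hq : ∀ i, ‖q i‖ = 1) {t : ℝ} (ht : 2 ≤ t) :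
    pairSum (fun i j ↦ ‖q i - q j‖ ^ t) ≤ 2 ^ (t - 2) * (Fintype.card ι : ℝ) ^ 2 := by
  have hdiam : ∀ i j, ‖q i - q j‖ ≤ 2 := fun i j ↦ by
    linarith [norm_sub_le (q i) (q j), hq i, hq j]
  calc pairSum (fun i j ↦ ‖q i - q j‖ ^ t)
      ≤ pairSum (fun i j ↦ 2 ^ (t - 2) * ‖q i - q j‖ ^ 2) :=
        pairSum_mono fun i j ↦ rpow_le_two_rpow_mul_sq (norm_nonneg _) (hdiam i j) ht
    _ = 2 ^ (t - 2) * ((Fintype.card ι : ℝ) ^ 2 - ‖∑ i, q i‖ ^ 2) := by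
        rw [pairSum_const_mul, pairSum_norm_sub_sq hq]
    _ ≤ 2 ^ (t - 2) * (Fintype.card ι : ℝ) ^ 2 := by
        gcongr
        exact sub_le_self _ (sq_nonneg _)

end UnitVectors

lemma avgE_eq {s : ℝ} (hs : s ≠ 0) {N : ℕ} (hN : 2 ≤ N)
    (q : Fin N → EuclideanSpace ℝ (Fin 3)) :
    avgE s N q = (2 / (N * (N - 1)) * pairSum (fun i j ↦ ‖q i - q j‖ ^ (-s)) - 1) / s := by
  have hN' : (2 : ℝ) ≤ N := by exact_mod_cast hN
  have hV : ∀ r, Vpair s r = r ^ (-s) / s - 1 / s := fun r ↦ by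
    rw [Vpair, if_neg hs, sub_div]
  have hsum : pairSum (fun i j ↦ Vpair s ‖q i - q j‖)
      = pairSum (fun i j ↦ ‖q i - q j‖ ^ (-s)) / s - (N * (N - 1) / 2) / s := by
    simp only [hV, pairSum_sub, pairSum_div, pairSum_one, Fintype.card_fin]
  change 2 / (N * (N - 1)) * pairSum (fun i j ↦ Vpair s ‖q i - q j‖) = _
  rw [hsum]
  have hN1 : (N : ℝ) - 1 ≠ 0 := by linarith
  have hN0 : (N : ℝ) ≠ 0 := by linarith
  field_simp

noncomputable def antipodalEnergy (s : ℝ) (N : ℕ) : ℝ :=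
  ((2 ^ (-s - 1) - 1) * N + 1) / (s * (N - 1))

lemma antipodalEnergy_eq (s : ℝ) {N : ℕ} (hN : 2 ≤ N) :
    antipodalEnergy s N = (2 / (N * (N - 1)) * (2 ^ (-s - 2) * N ^ 2) - 1) / s := by
  have hN' : (2 : ℝ) ≤ N := by exact_mod_cast hN
  have h2 : (2 : ℝ) ^ (-s - 1) = 2 * 2 ^ (-s - 2) := by
    rw [show -s - 1 = 1 + (-s - 2) by ring, Real.rpow_add two_pos, Real.rpow_one]
  have hN1 : (N : ℝ) - 1 ≠ 0 := by linarith
  have hN0 : (N : ℝ) ≠ 0 := by linarith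
  rw [antipodalEnergy, h2, mul_comm s, ← div_div]
  congr 1
  field_simp
  ring

lemma antipodalEnergy_le_avgE {s : ℝ} (hs : s ≤ -2) {N : ℕ} (hN : 2 ≤ N)
    {q : Fin N → EuclideanSpace ℝ (Fin 3)} (hq : ∀ i, ‖q i‖ = 1) :
    antipodalEnergy s N ≤ avgE s N q := by
  have hT := pairSum_rpow_le hq (t := -s) (by linarith)
  rw [Fintype.card_fin] at hT
  rw [avgE_eq (by linarith) hN, antipodalEnergy_eq s hN]
  have hN' : (2 : ℝ) ≤ N := by exact_mod_cast hN
  have : 0 ≤ 2 / ((N : ℝ) * (N - 1)) := div_nonneg zero_le_two (by nlinarith)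
  apply div_le_div_of_nonpos_of_le (by linarith)
  gcongr

lemma rpow_eq_two_rpow_mul_sq {r t : ℝ} (hr : r = 0 ∨ r = 2) (ht : t ≠ 0) :
    r ^ t = 2 ^ (t - 2) * r ^ 2 := by
  rcases hr with rfl | rfl
  · simp [Real.zero_rpow ht]
  · rw [← Real.rpow_natCast, ← Real.rpow_add two_pos]
    norm_num

lemma sum_neg_one_pow_fin_two_mul (m : ℕ) : ∑ i : Fin (2 * m), (-1 : ℝ) ^ (i : ℕ) = 0 := by
  rw [Fin.sum_univ_eq_sum_range (fun i ↦ (-1 : ℝ) ^ i)]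
  induction m with
  | zero => simp
  | succ m ih =>
    rw [mul_add_one, Finset.sum_range_succ, Finset.sum_range_succ, ih, pow_succ]
    simp

lemma avgE_neg_one_pow_smul {s : ℝ} (hs : s ≠ 0) {m : ℕ} (hm : 1 ≤ m)
    {u : EuclideanSpace ℝ (Fin 3)} (hu : ‖u‖ = 1) :
    avgE s (2 * m) (fun i ↦ (-1 : ℝ) ^ (i : ℕ) • u) = antipodalEnergy s (2 * m) := by
  set q : Fin (2 * m) → EuclideanSpace ℝ (Fin 3) := fun i ↦ (-1 : ℝ) ^ (i : ℕ) • u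
  have hq : ∀ i, ‖q i‖ = 1 := fun i ↦ by simp [q, norm_smul, hu]
  have hdist : ∀ i j, ‖q i - q j‖ = 0 ∨ ‖q i - q j‖ = 2 := fun i j ↦ by
    simp only [q, ← sub_smul, norm_smul, hu, mul_one, Real.norm_eq_abs]
    rcases neg_one_pow_eq_or ℝ (i : ℕ) with hi | hi <;>
      rcases neg_one_pow_eq_or ℝ (j : ℕ) with hj | hj <;> norm_num [hi, hj]
  have hcenter : ∑ i, q i = 0 := by
    simp only [q, ← Finset.sum_smul, sum_neg_one_pow_fin_two_mul, zero_smul]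
  have hT : pairSum (fun i j ↦ ‖q i - q j‖ ^ (-s)) = 2 ^ (-s - 2) * ((2 * m : ℕ) : ℝ) ^ 2 := by
    rw [pairSum_congr fun i j ↦ rpow_eq_two_rpow_mul_sq (hdist i j) (neg_ne_zero.2 hs),
      pairSum_const_mul, pairSum_norm_sub_sq hq, hcenter, Fintype.card_fin]
    simp
  rw [avgE_eq hs (by omega), antipodalEnergy_eq s (by omega), hT]

lemma continuous_avgE {s : ℝ} (hs : s < 0) (N : ℕ) : Continuous (avgE s N) := by
  have hV : Vpair s = fun r ↦ (r ^ (-s) - 1) / s := funext fun r ↦ if_neg hs.ne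
  refine continuous_const.mul <| continuous_finsetSum _ fun i _ ↦
    continuous_finsetSum _ fun j _ ↦ ?_
  split_ifs
  · rw [hV]
    fun_prop (disch := linarith)
  · exact continuous_const

section Arc

variable {E : Type*} [NormedAddCommGroup E] [InnerProductSpace ℝ E]

noncomputable def alternatingArc (u v : E) (θ : ℝ) (N : ℕ) : Fin N → E :=
  fun i ↦ (-1 : ℝ) ^ (i : ℕ) • (cos (θ * i) • u + sin (θ * i) • v)

variable {u v : E}

lemma alternatingArc_zero (N : ℕ) :
    alternatingArc u v 0 N = fun i : Fin N ↦ (-1 : ℝ) ^ (i : ℕ) • u := by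
  funext i
  simp [alternatingArc]

lemma continuous_alternatingArc (N : ℕ) :
    Continuous fun θ ↦ alternatingArc u v θ N := by
  unfold alternatingArc
  fun_prop

lemma norm_alternatingArc (hu : ‖u‖ = 1) (hv : ‖v‖ = 1) (huv : inner ℝ u v = 0)
    (θ : ℝ) {N : ℕ} (i : Fin N) : ‖alternatingArc u v θ N i‖ = 1 := by
  have hsq : ‖cos (θ * i) • u + sin (θ * i) • v‖ ^ 2 = 1 := by
    rw [norm_add_sq_real, norm_smul, norm_smul, real_inner_smul_left, real_inner_smul_right,
      huv, hu, hv, Real.norm_eq_abs, Real.norm_eq_abs]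
    simp only [mul_one, mul_zero, add_zero, sq_abs, cos_sq_add_sin_sq]
  rw [alternatingArc, norm_smul, norm_pow, norm_neg, norm_one, one_pow, one_mul]
  exact (pow_eq_one_iff_of_nonneg (norm_nonneg _) two_ne_zero).1 hsq

lemma inner_alternatingArc_left (hu : ‖u‖ = 1) (huv : inner ℝ u v = 0)
    (θ : ℝ) {N : ℕ} (i : Fin N) :
    inner ℝ (alternatingArc u v θ N i) u = (-1 : ℝ) ^ (i : ℕ) * cos (θ * i) := by
  simp [alternatingArc, inner_add_left, real_inner_smul_left, hu,
    real_inner_comm u v, huv]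

lemma alternatingArc_injective (hu : ‖u‖ = 1) (huv : inner ℝ u v = 0) {θ : ℝ} (hθ : 0 < θ)
    {N : ℕ} (hθN : θ * N ≤ π / 2) : Function.Injective (alternatingArc u v θ N) := by
  have hmem : ∀ i : Fin N, θ * i ∈ Set.Icc 0 (π / 2) := fun i ↦ by
    have : (i : ℝ) ≤ N := by exact_mod_cast i.2.le
    constructor <;> nlinarith
  intro i j hij
  have hcos : cos (θ * i) = cos (θ * j) := by
    have := congrArg (fun x ↦ |inner ℝ x u|) hij
    simpa [inner_alternatingArc_left hu huv, abs_mul,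
      abs_of_nonneg (cos_nonneg_of_mem_Icc ⟨by linarith [(hmem i).1, pi_pos], (hmem i).2⟩),
      abs_of_nonneg (cos_nonneg_of_mem_Icc ⟨by linarith [(hmem j).1, pi_pos], (hmem j).2⟩)]
      using this
  have hπ : ∀ k : Fin N, θ * k ∈ Set.Icc 0 π := fun k ↦
    ⟨(hmem k).1, (hmem k).2.trans (by linarith [pi_pos])⟩
  have := injOn_cos (hπ i) (hπ j) hcos
  exact Fin.ext (by exact_mod_cast mul_left_cancel₀ hθ.ne' this)

lemma eventually_alternatingArc_injective (hu : ‖u‖ = 1) (huv : inner ℝ u v = 0) (N : ℕ) :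
    ∀ᶠ θ in 𝓝[>] 0, Function.Injective (alternatingArc u v θ N) := by
  have hsmall : ∀ᶠ θ in 𝓝 (0 : ℝ), θ * N < π / 2 :=
    (continuous_id.mul continuous_const).continuousAt.eventually_lt continuousAt_const
      (by simpa using pi_div_two_pos)
  filter_upwards [self_mem_nhdsWithin, nhdsWithin_le_nhds hsmall] with θ hθ hθN
  exact alternatingArc_injective hu huv hθ hθN.le

end Arc

def configEnergies (s : ℝ) (N : ℕ) : Set ℝ :=
  { E : ℝ | ∃ q : Fin N → EuclideanSpace ℝ (Fin 3),
    (∀ i, ‖q i‖ = 1) ∧ Function.Injective q ∧ E = avgE s N q }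

lemma vmin_eq_sInf_configEnergies (s : ℝ) (N : ℕ) : vmin s N = sInf (configEnergies s N) := rfl

lemma vmin_two_mul {s : ℝ} (hs : s ≤ -2) {m : ℕ} (hm : 1 ≤ m) :
    vmin s (2 * m) = antipodalEnergy s (2 * m) := by
  set b := EuclideanSpace.basisFun (Fin 3) ℝ
  have hb := b.orthonormal
  have hu : ‖b 0‖ = 1 := hb.1 0
  have hv : ‖b 1‖ = 1 := hb.1 1
  have huv : inner ℝ (b 0) (b 1) = 0 := hb.2 (by decide)
  set f : ℝ → ℝ := fun θ ↦ avgE s (2 * m) (alternatingArc (b 0) (b 1) θ (2 * m))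
  have hlim : Tendsto f (𝓝[>] 0) (𝓝 (antipodalEnergy s (2 * m))) := by
    have hf0 : f 0 = antipodalEnergy s (2 * m) := by
      simp only [f, alternatingArc_zero]
      exact avgE_neg_one_pow_smul (by linarith) hm hu
    rw [← hf0]
    exact ((continuous_avgE (by linarith) _).comp
      (continuous_alternatingArc _)).continuousAt.continuousWithinAt.tendsto
  have hmem : ∀ᶠ θ in 𝓝[>] 0, f θ ∈ configEnergies s (2 * m) :=
    (eventually_alternatingArc_injective hu huv _).mono fun θ hinj ↦
      ⟨_, norm_alternatingArc hu hv huv θ, hinj, rfl⟩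
  have hlower : ∀ x ∈ configEnergies s (2 * m), antipodalEnergy s (2 * m) ≤ x := by
    rintro _ ⟨q, hq, -, rfl⟩
    exact antipodalEnergy_le_avgE hs (by omega) hq
  rw [vmin_eq_sInf_configEnergies]
  refine le_antisymm ?_ (le_csInf (hmem.exists.elim fun θ h ↦ ⟨_, h⟩) hlower)
  exact ge_of_tendsto hlim (hmem.mono fun θ h ↦ csInf_le ⟨_, hlower⟩ h)

lemma antipodalEnergy_eq_add (s : ℝ) {N : ℕ} (hN : 2 ≤ N) :
    antipodalEnergy s N = (2 ^ (-s - 1) - 1) / s + 2 ^ (-s - 1) / s * ((N : ℝ) - 1)⁻¹ := by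
  have hN1 : (N : ℝ) - 1 ≠ 0 := by
    have : (2 : ℝ) ≤ N := by exact_mod_cast hN
    linarith
  rw [antipodalEnergy, mul_comm s, ← div_div, div_mul_eq_mul_div, ← add_div]
  congr 1
  field_simp
  ring

lemma antipodalEnergy_two_mul_second_diff_neg {s : ℝ} (hs : s < 0) {n : ℕ} (hn : 2 ≤ n) :
    antipodalEnergy s (2 * (n - 1)) - 2 * antipodalEnergy s (2 * n)
      + antipodalEnergy s (2 * (n + 1)) < 0 := by
  have hx : (2 : ℝ) ≤ n := by exact_mod_cast hn
  rw [antipodalEnergy_eq_add s (by omega), antipodalEnergy_eq_add s (by omega),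
    antipodalEnergy_eq_add s (by omega)]
  push_cast [Nat.cast_sub (by omega : 1 ≤ n)]
  have hc : 2 ^ (-s - 1) / s < 0 := div_neg_of_pos_of_neg (by positivity) hs
  have hconvex : 0 < (2 * ((n : ℝ) - 1) - 1)⁻¹ - 2 * (2 * (n : ℝ) - 1)⁻¹
      + (2 * ((n : ℝ) + 1) - 1)⁻¹ := by
    have h1 : 0 < 2 * (n : ℝ) - 3 := by linarith
    have h2 : 0 < 2 * (n : ℝ) - 1 := by linarith
    have h3 : 0 < 2 * (n : ℝ) + 1 := by linarith
    rw [show 2 * ((n : ℝ) - 1) - 1 = 2 * n - 3 by ring,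
      show 2 * ((n : ℝ) + 1) - 1 = 2 * n + 1 by ring]
    have : (2 * (n : ℝ) - 3)⁻¹ - 2 * (2 * (n : ℝ) - 1)⁻¹ + (2 * (n : ℝ) + 1)⁻¹
        = 8 / ((2 * n - 3) * (2 * n - 1) * (2 * n + 1)) := by
      field_simp
      ring
    rw [this]
    positivity
  linarith [mul_neg_of_neg_of_pos hc hconvex]

theorem stmt8 (s : ℝ) (hs : s < -2) (n : ℕ) (hn : 2 ≤ n) :
    vmin s (2 * (n - 1)) - 2 * vmin s (2 * n) + vmin s (2 * (n + 1)) < 0 := by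
  rw [vmin_two_mul hs.le (by omega), vmin_two_mul hs.le (by omega),
    vmin_two_mul hs.le (by omega)]
  exact antipodalEnergy_two_mul_second_diff_neg (by linarith) hn
end
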